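/- arXiv:2312.04865 — 2 statements merged into one kernel-verified Lean document; each statement's English description precedes it below -/
import Mathlib

section
/- Let P† ∈ {0,1}^{n×n'} be a partition matrix with all clusters nonempty and P = P† D⁻¹ its normalized version (D diagonal with D_{jj} = |S_j|), so that Pᵀ P† = I_{n'}. Let σ : ℝ → ℝ be any function applied entrywise, X ∈ ℝ^{n×d}, W₁ ∈ ℝ^{d×d₁}, W₂ ∈ ℝ^{d₁×d₂}. Then the two-layer network with propagation matrix P† Pᵀ collapses to a per-cluster MLP: σ(P† Pᵀ σ(P† Pᵀ X W₁) W₂) = P† σ(σ(Pᵀ X W₁) W₂). -/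
open Matrix

/-- **Two-layer nonlinear GCN collapses under structural compression (StructComp, Appendix C).**
Let `P†` be the partition matrix of a cluster map `S` with all clusters nonempty and
`P = P† D⁻¹` its normalized version (`D` diagonal with the cluster sizes). Then for any
entrywise nonlinearity `σ`, features `X` and weights `W₁, W₂`,
`σ(P† Pᵀ σ(P† Pᵀ X W₁) W₂) = P† σ(σ(Pᵀ X W₁) W₂)`. -/
theorem structcomp_two_layer_collapse {n n' d d₁ d₂ : ℕ} (S : Fin n → Fin n')
    (hS : Function.Surjective S)
    (Pdag : Matrix (Fin n) (Fin n') ℝ)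
    (hP : ∀ i j, Pdag i j = if S i = j then 1 else 0)
    (D : Matrix (Fin n') (Fin n') ℝ)
    (hD : D = Matrix.diagonal fun j => ((Finset.univ.filter fun i => S i = j).card : ℝ))
    (P : Matrix (Fin n) (Fin n') ℝ) (hPdef : P = Pdag * D⁻¹)
    (σ : ℝ → ℝ) (X : Matrix (Fin n) (Fin d) ℝ)
    (W₁ : Matrix (Fin d) (Fin d₁) ℝ) (W₂ : Matrix (Fin d₁) (Fin d₂) ℝ) :
    (Pdag * Pᵀ * ((Pdag * Pᵀ * X * W₁).map σ) * W₂).map σ =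
      Pdag * (((Pᵀ * X * W₁).map σ * W₂).map σ) := by
  set c : Fin n' → ℝ := fun j => ((Finset.univ.filter fun i => S i = j).card : ℝ) with hc
  have hcne : ∀ j, c j ≠ 0 := by
    intro j
    obtain ⟨i, hi⟩ := hS j
    have hmem : i ∈ Finset.univ.filter fun i => S i = j := by simp [hi]
    have hpos : 0 < (Finset.univ.filter fun i => S i = j).card := Finset.card_pos.2 ⟨i, hmem⟩
    exact_mod_cast Nat.cast_ne_zero.2 hpos.ne'
  -- value of P
  have hPval : ∀ i j, P i j = if S i = j then (c j)⁻¹ else 0 := by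
    intro i j
    have hDinv : D⁻¹ = Matrix.diagonal fun j => (c j)⁻¹ := by
      rw [hD]
      apply Matrix.inv_eq_right_inv
      rw [Matrix.diagonal_mul_diagonal]
      convert Matrix.diagonal_one with j
      exact mul_inv_cancel₀ (hcne j)
    rw [hPdef, hDinv, Matrix.mul_diagonal, hP]
    by_cases h : S i = j <;> simp [h]
  -- Pdag * Z picks row S i
  have hrow : ∀ {m : ℕ} (Z : Matrix (Fin n') (Fin m) ℝ) (i : Fin n) (k : Fin m),
      (Pdag * Z) i k = Z (S i) k := by
    intro m Z i k
    simp only [Matrix.mul_apply, hP]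
    rw [Finset.sum_eq_single (S i)]
    · simp
    · intro b _ hb
      rw [if_neg (fun h => hb h.symm), zero_mul]
    · simp
  have hmap : ∀ {m : ℕ} (Z : Matrix (Fin n') (Fin m) ℝ),
      (Pdag * Z).map σ = Pdag * Z.map σ := by
    intro m Z
    ext i k
    simp [Matrix.map_apply, hrow]
  have hPtP : Pᵀ * Pdag = 1 := by
    ext j j'
    simp only [Matrix.mul_apply, Matrix.transpose_apply, hPval, hP]
    by_cases h : j = j'
    · subst h
      have heq : ∀ i ∈ Finset.univ, (if S i = j then (c j)⁻¹ else 0) *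
          (if S i = j then (1:ℝ) else 0) = if S i = j then (c j)⁻¹ else 0 := by
        intro i _
        split <;> simp
      rw [Finset.sum_congr rfl heq, ← Finset.sum_filter, Finset.sum_const, nsmul_eq_mul,
        Matrix.one_apply_eq]
      exact mul_inv_cancel₀ (hcne j)
    · rw [Finset.sum_eq_zero, Matrix.one_apply_ne h]
      intro i _
      by_cases hi : S i = j
      · rw [if_neg (fun h' => h (hi.symm.trans h')), mul_zero]
      · rw [if_neg hi, zero_mul]
  -- main computation
  have h1 : Pdag * Pᵀ * X * W₁ = Pdag * (Pᵀ * X * W₁) := by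
    simp [Matrix.mul_assoc]
  rw [h1, hmap, show Pdag * Pᵀ * (Pdag * ((Pᵀ * X * W₁).map σ)) * W₂
      = Pdag * (((Pᵀ * X * W₁).map σ) * W₂) by
    rw [Matrix.mul_assoc Pdag Pᵀ, ← Matrix.mul_assoc Pᵀ, hPtP, Matrix.one_mul,
      Matrix.mul_assoc], hmap]
end

section
/- (Theorem 2 of StructComp, made precise via second-order Taylor surrogate.) Let V be a finite index set of nodes with scalar representations h : V → ℝ, and for each i let pos(i) and neg(i) be finite sets of positive and negative partners. Define the no-augmentation InfoNCE loss L = Σ_i Σ_{j∈pos(i)} h_i·h_j + Σ_i Σ_{j∈neg(i)} log(e^{h_i·h_i} + e^{h_i·h_j}). Let (h̃_i)_{i∈V} be square-integrable real random variables with E[h̃_i] = h_i for every i. Define the augmented surrogate loss L̃ = Σ_i Σ_{j∈pos(i)} h̃_i·h_j + Σ_i Σ_{j∈neg(i)} T_{ij}(h̃_i), where T_{ij} is the second-order Taylor polynomial of x ↦ log(e^{x·h_i} + e^{x·h_j}) around x = h_i. Then E[L̃] = L + Σ_i Σ_{j∈neg(i)} φ(h_i, h_j)·Var(h̃_i), where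 φ(h_i, h_j) = [(e^{h_i²}h_i² + e^{h_i h_j}h_j²)(e^{h_i²} + e^{h_i h_j}) − (e^{h_i²}h_i + e^{h_i h_j}h_j)²] / (2(e^{h_i²} + e^{h_i h_j})²); i.e., the augmentation introduces an additional variance-based regularization term into the InfoNCE loss. -/
open MeasureTheory ProbabilityTheory

/-- The coefficient `φ(h_i, h_j)` appearing in the regularization term of
Theorem 2 of StructComp. -/
noncomputable def phiCoeff (hi hj : ℝ) : ℝ :=
  ((Real.exp (hi ^ 2) * hi ^ 2 + Real.exp (hi * hj) * hj ^ 2) *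
        (Real.exp (hi ^ 2) + Real.exp (hi * hj)) -
      (Real.exp (hi ^ 2) * hi + Real.exp (hi * hj) * hj) ^ 2) /
    (2 * (Real.exp (hi ^ 2) + Real.exp (hi * hj)) ^ 2)

/-!
In expectation, the second-order Taylor polynomial of a smooth `g` around the mean `m` of a
square-integrable `X` loses its linear term and keeps `g m + g''(m)/2 · Var X`. For
`g x = log (e^{x a} + e^{x b})`, `g''` is the variance of `{a, b}` under the softmax weights
`e^{x a}, e^{x b}`, and at `x = a` half of it is `phiCoeff a b`. Summing over the pairs,
with the positive-pair terms linear in `h̃_i`, gives the theorem.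
-/

open Real

section LogSumExp

variable (a b : ℝ)

lemma hasDerivAt_exp_mul_const (x : ℝ) :
    HasDerivAt (fun x => exp (x * a)) (exp (x * a) * a) x := by
  simpa using ((hasDerivAt_id x).mul_const a).exp

lemma deriv_log_exp_add_exp :
    deriv (fun x => log (exp (x * a) + exp (x * b))) =
      fun x => (exp (x * a) * a + exp (x * b) * b) / (exp (x * a) + exp (x * b)) :=
  funext fun x => (((hasDerivAt_exp_mul_const a x).add (hasDerivAt_exp_mul_const b x)).log
    (add_pos (exp_pos _) (exp_pos _)).ne').deriv

lemma deriv_deriv_log_exp_add_exp (x : ℝ) :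
    deriv (deriv fun x => log (exp (x * a) + exp (x * b))) x =
      ((exp (x * a) * a * a + exp (x * b) * b * b) * (exp (x * a) + exp (x * b)) -
          (exp (x * a) * a + exp (x * b) * b) * (exp (x * a) * a + exp (x * b) * b)) /
        (exp (x * a) + exp (x * b)) ^ 2 := by
  rw [deriv_log_exp_add_exp]
  exact ((((hasDerivAt_exp_mul_const a x).mul_const a).add
    ((hasDerivAt_exp_mul_const b x).mul_const b)).div
    ((hasDerivAt_exp_mul_const a x).add (hasDerivAt_exp_mul_const b x))
    (add_pos (exp_pos _) (exp_pos _)).ne').deriv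

lemma half_deriv_deriv_log_exp_add_exp :
    1 / 2 * deriv (deriv fun x => log (exp (x * a) + exp (x * b))) a = phiCoeff a b := by
  have hpos : 0 < exp (a ^ 2) + exp (a * b) := by positivity
  rw [deriv_deriv_log_exp_add_exp, ← sq, phiCoeff]
  field_simp

end LogSumExp

section TaylorExpectation

variable {Ω : Type*} [MeasurableSpace Ω] {μ : Measure Ω} {X : Ω → ℝ} {m : ℝ}

lemma integrable_quadratic_sub_of_memLp (hX : MemLp X 2 μ) [IsFiniteMeasure μ] (A B C : ℝ) :
    Integrable (fun ω => A + B * (X ω - m) + C * (X ω - m) ^ 2) μ := by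
  have hsq : Integrable (fun ω => (X ω - m) ^ 2) μ := (hX.sub (memLp_const m)).integrable_sq
  exact ((integrable_const A).add
    (((hX.integrable one_le_two).sub (integrable_const m)).const_mul B)).add (hsq.const_mul C)

lemma integral_quadratic_sub_mean [IsProbabilityMeasure μ] (hX : MemLp X 2 μ)
    (hm : ∫ ω, X ω ∂μ = m) (A B C : ℝ) :
    ∫ ω, (A + B * (X ω - m) + C * (X ω - m) ^ 2) ∂μ = A + C * variance X μ := by
  have hXint : Integrable X μ := hX.integrable one_le_two
  have hlin : Integrable (fun ω => B * (X ω - m)) μ :=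
    (hXint.sub (integrable_const m)).const_mul B
  have hsq : Integrable (fun ω => C * (X ω - m) ^ 2) μ :=
    (hX.sub (memLp_const m)).integrable_sq.const_mul C
  have hvar : variance X μ = ∫ ω, (X ω - m) ^ 2 ∂μ := by
    rw [variance_eq_integral hX.aestronglyMeasurable.aemeasurable, hm]
  have hconst_lin : Integrable (fun ω => A + B * (X ω - m)) μ := (integrable_const A).add hlin
  rw [integral_add hconst_lin hsq, integral_add (integrable_const A) hlin,
    integral_const_mul, integral_const_mul, integral_sub hXint (integrable_const m), hm, hvar]
  simp

end TaylorExpectation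

section DoubleSum

variable {Ω ι κ E : Type*} [MeasurableSpace Ω] {μ : Measure Ω}
  [NormedAddCommGroup E] (s : Finset ι) (t : ι → Finset κ)
  {F : ι → κ → Ω → E}

lemma integrable_finsetSum_finsetSum (hF : ∀ i j, Integrable (F i j) μ) :
    Integrable (fun ω => ∑ i ∈ s, ∑ j ∈ t i, F i j ω) μ :=
  integrable_finsetSum _ fun i _ => integrable_finsetSum _ fun j _ => hF i j

lemma integral_finsetSum_finsetSum [NormedSpace ℝ E] (hF : ∀ i j, Integrable (F i j) μ) :
    ∫ ω, ∑ i ∈ s, ∑ j ∈ t i, F i j ω ∂μ = ∑ i ∈ s, ∑ j ∈ t i, ∫ ω, F i j ω ∂μ := by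
  rw [integral_finsetSum _ fun i _ => integrable_finsetSum _ fun j _ => hF i j]
  exact Finset.sum_congr rfl fun i _ => integral_finsetSum _ fun j _ => hF i j

end DoubleSum

/-- **Theorem 2 of StructComp (via second-order Taylor surrogate).**
For the no-augmentation InfoNCE loss
`L = Σ_i Σ_{j∈pos(i)} h_i·h_j + Σ_i Σ_{j∈neg(i)} log(e^{h_i·h_i} + e^{h_i·h_j})`
and mean-preserving square-integrable random perturbations `h̃_i` of the anchors,
the expectation of the augmented surrogate loss (with each negative-pair term replaced
by its second-order Taylor polynomial around `h_i` evaluated at `h̃_i`) equals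
`L + Σ_i Σ_{j∈neg(i)} φ(h_i, h_j)·Var(h̃_i)`. -/
theorem structcomp_infonce_regularization {V : Type*} [Fintype V]
    {Ω : Type*} [MeasurableSpace Ω] (μ : Measure Ω) [IsProbabilityMeasure μ]
    (h : V → ℝ) (pos neg : V → Finset V)
    (htil : V → Ω → ℝ)
    (hmem : ∀ i, MemLp (htil i) 2 μ)
    (hmean : ∀ i, ∫ ω, htil i ω ∂μ = h i)
    (f : V → V → ℝ → ℝ)
    (hf : ∀ i j, f i j = fun x : ℝ => Real.log (Real.exp (x * h i) + Real.exp (x * h j)))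
    (T : V → V → ℝ → ℝ)
    (hT : ∀ i j x, T i j x = f i j (h i) + deriv (f i j) (h i) * (x - h i)
        + (1 / 2) * deriv (deriv (f i j)) (h i) * (x - h i) ^ 2)
    (L : ℝ)
    (hL : L = (∑ i, ∑ j ∈ pos i, h i * h j)
        + ∑ i, ∑ j ∈ neg i, Real.log (Real.exp (h i * h i) + Real.exp (h i * h j))) :
    ∫ ω, ((∑ i, ∑ j ∈ pos i, htil i ω * h j)
        + ∑ i, ∑ j ∈ neg i, T i j (htil i ω)) ∂μ =
      L + ∑ i, ∑ j ∈ neg i, phiCoeff (h i) (h j) * variance (htil i) μ := by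
  have hpos_int (i j : V) : Integrable (fun ω => htil i ω * h j) μ :=
    ((hmem i).integrable one_le_two).mul_const _
  have hneg_int (i j : V) : Integrable (fun ω => T i j (htil i ω)) μ := by
    simp only [hT]
    exact integrable_quadratic_sub_of_memLp (hmem i) _ _ _
  have hneg (i j : V) : ∫ ω, T i j (htil i ω) ∂μ =
      log (exp (h i * h i) + exp (h i * h j)) + phiCoeff (h i) (h j) * variance (htil i) μ := by
    simp only [hT, hf]
    rw [integral_quadratic_sub_mean (hmem i) (hmean i), half_deriv_deriv_log_exp_add_exp]
  rw [integral_add (integrable_finsetSum_finsetSum _ _ hpos_int)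
      (integrable_finsetSum_finsetSum _ _ hneg_int),
    integral_finsetSum_finsetSum _ _ hpos_int, integral_finsetSum_finsetSum _ _ hneg_int]
  simp only [integral_mul_const, hmean, hneg, Finset.sum_add_distrib, hL]
  ring
end
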